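/- arXiv:2110.04868 — 3 statements merged into one kernel-verified Lean document; each statement's English description precedes it below -/
import Mathlib

section
/- Let (Ω, P) be a probability space, U : Ω → Ω a measure-preserving transformation, and (W_n) a sequence of non-negative real-valued random variables on Ω satisfying the subadditivity W_{n+m} ≤ W_n + W_m ∘ U^n for all m, n ∈ ℕ, with W_1 integrable. Then there exists a U-invariant random variable W_∞ such that (1/n) W_n → W_∞ almost surely. If moreover U is ergodic, then W_∞ is almost everywhere constant. -/
/-!
Steele's proof. Let `g = liminf W_n / n`. Iterating subadditivity gives `W_n ≤ ∑_{k<n} W_1 ∘ U^k`,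
so the maximal ergodic inequality bounds `W_n / n` almost surely, and `W_{n+1} ≤ W_1 + W_n ∘ U`
gives `g ≤ g ∘ U`; as `U` preserves `P`, `g ∘ U = g` a.e. For the upper bound fix `ε > 0` and
call a point good if `W_n ≤ n (g + ε)` for some `n ≤ N`. Cutting `[0, r)` greedily into good blocks
and single bad steps bounds `W_r` by `r (g + ε)`, plus the Birkhoff sum of `W_1` restricted to bad
points, plus the last `N` terms of the orbit. The bad part has integral tending to `0` as
`N → ∞`, so by the maximal inequality its averages are uniformly small for some `N`, and the last
`N` terms are `o(r)` by Borel–Cantelli.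
-/

open MeasureTheory Filter Topology Finset

section BirkhoffMax

variable {α : Type*} {f : α → α}

noncomputable def birkhoffMax (f : α → α) (g : α → ℝ) (N : ℕ) : α → ℝ :=
  (range (N + 1)).sup' nonempty_range_add_one (birkhoffSum f g)

theorem birkhoffSum_le_birkhoffMax (g : α → ℝ) {n N : ℕ} (h : n ≤ N) (x : α) :
    birkhoffSum f g n x ≤ birkhoffMax f g N x := by
  rw [birkhoffMax, Finset.sup'_apply]
  exact le_sup' (fun n => birkhoffSum f g n x) (mem_range.2 (Nat.lt_succ_of_le h))

theorem birkhoffMax_nonneg (g : α → ℝ) (N : ℕ) (x : α) : 0 ≤ birkhoffMax f g N x := by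
  simpa using birkhoffSum_le_birkhoffMax (f := f) g (Nat.zero_le N) x

theorem birkhoffMax_pos_iff {g : α → ℝ} {N : ℕ} {x : α} :
    0 < birkhoffMax f g N x ↔ ∃ n ≤ N, 0 < birkhoffSum f g n x := by
  simp [birkhoffMax, Finset.sup'_apply, lt_sup'_iff]

theorem birkhoffMax_le_max_zero_add (g : α → ℝ) (N : ℕ) (x : α) :
    birkhoffMax f g N x ≤ max 0 (g x + birkhoffMax f g N (f x)) := by
  rw [birkhoffMax, Finset.sup'_apply]
  refine sup'_le _ _ fun n hn => ?_
  rcases n with _ | n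
  · simp
  · have hnN : n ≤ N := by rw [mem_range] at hn; omega
    rw [birkhoffSum_succ']
    exact le_max_of_le_right (add_le_add le_rfl (birkhoffSum_le_birkhoffMax g hnN (f x)))

variable [MeasurableSpace α] {μ : Measure α}

theorem measurable_birkhoffSum (hf : Measurable f) {g : α → ℝ} (hg : Measurable g) (n : ℕ) :
    Measurable (birkhoffSum f g n) :=
  Finset.measurable_sum _ fun k _ => hg.comp (hf.iterate k)

theorem measurable_birkhoffMax (hf : Measurable f) {g : α → ℝ} (hg : Measurable g) (N : ℕ) :
    Measurable (birkhoffMax f g N) :=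
  Finset.measurable_range_sup' fun n _ => measurable_birkhoffSum hf hg n

namespace MeasureTheory.MeasurePreserving

theorem integrable_birkhoffSum (hf : MeasurePreserving f μ μ) {g : α → ℝ}
    (hg : Integrable g μ) (n : ℕ) : Integrable (birkhoffSum f g n) μ :=
  integrable_finsetSum _ fun k _ => (hf.iterate k).integrable_comp_of_integrable hg

theorem integrable_birkhoffMax (hf : MeasurePreserving f μ μ) {g : α → ℝ}
    (hg : Integrable g μ) (N : ℕ) : Integrable (birkhoffMax f g N) μ :=
  sup'_induction (p := fun F => Integrable F μ) _ _ (fun _ h₁ _ h₂ => h₁.sup h₂) fun n _ =>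
    hf.integrable_birkhoffSum hg n

/-- Garsia's maximal ergodic lemma. -/
theorem setIntegral_birkhoffMax_pos_nonneg (hf : MeasurePreserving f μ μ) {g : α → ℝ}
    (hgm : Measurable g) (hg : Integrable g μ) (N : ℕ) :
    0 ≤ ∫ x in {x | 0 < birkhoffMax f g N x}, g x ∂μ := by
  set M := birkhoffMax f g N
  set G := {x | 0 < M x}
  have hG : MeasurableSet G :=
    measurableSet_lt measurable_const (measurable_birkhoffMax hf.measurable hgm N)
  have hM : Integrable M μ := hf.integrable_birkhoffMax hg N
  have hMf : Integrable (M ∘ f) μ := hf.integrable_comp_of_integrable hM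
  have hMf_eq : ∫ x, M (f x) ∂μ = ∫ x, M x ∂μ := by
    rw [← integral_map hf.measurable.aemeasurable (hf.map_eq.symm ▸ hM.aestronglyMeasurable),
      hf.map_eq]
  have hstep : ∀ x ∈ G, M x - M (f x) ≤ g x := fun x hx => by
    rcases le_max_iff.1 (birkhoffMax_le_max_zero_add (f := f) g N x) with h | h
    · exact absurd hx (not_lt.2 h)
    · linarith
  calc 0 = ∫ x, M x ∂μ - ∫ x, M (f x) ∂μ := by rw [hMf_eq, sub_self]
    _ ≤ ∫ x in G, M x ∂μ - ∫ x in G, M (f x) ∂μ := by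
      have hMG : ∫ x in G, M x ∂μ = ∫ x, M x ∂μ :=
        setIntegral_eq_integral_of_forall_compl_eq_zero fun x hx =>
          le_antisymm (not_lt.1 hx) (birkhoffMax_nonneg g N x)
      rw [hMG]
      exact sub_le_sub_left (setIntegral_le_integral hMf
        (Eventually.of_forall fun x => birkhoffMax_nonneg g N (f x))) _
    _ = ∫ x in G, (M x - M (f x)) ∂μ := (integral_sub hM.integrableOn hMf.integrableOn).symm
    _ ≤ ∫ x in G, g x ∂μ := setIntegral_mono_on (hM.integrableOn.sub hMf.integrableOn)
      hg.integrableOn hG hstep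

theorem measure_exists_birkhoffSum_gt_le [IsFiniteMeasure μ] (hf : MeasurePreserving f μ μ)
    {φ : α → ℝ} (hφm : Measurable φ) (hφ : Integrable φ μ) (hφ₀ : 0 ≤ φ) {c : ℝ} (hc : 0 < c) :
    μ {x | ∃ n : ℕ, c * n < birkhoffSum f φ n x} ≤ ENNReal.ofReal ((∫ x, φ x ∂μ) / c) := by
  set G : ℕ → Set α := fun N => {x | 0 < birkhoffMax f (fun x => φ x - c) N x}
  have hS (n : ℕ) (x : α) :
      birkhoffSum f (fun x => φ x - c) n x = birkhoffSum f φ n x - c * n := by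
    simp [birkhoffSum, sum_sub_distrib, mul_comm]
  have hUnion : {x | ∃ n : ℕ, c * n < birkhoffSum f φ n x} = ⋃ N, G N := by
    ext x
    simp only [G, Set.mem_ofPred_eq, Set.mem_iUnion, birkhoffMax_pos_iff, hS, sub_pos]
    exact ⟨fun ⟨n, hn⟩ => ⟨n, n, le_rfl, hn⟩, fun ⟨_, n, _, hn⟩ => ⟨n, hn⟩⟩
  have hmono : Monotone G := fun N N' h x hx => by
    simp only [G, Set.mem_ofPred_eq, birkhoffMax_pos_iff] at hx ⊢
    obtain ⟨n, hn, hpos⟩ := hx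
    exact ⟨n, hn.trans h, hpos⟩
  have hbound (N : ℕ) : c * μ.real (G N) ≤ ∫ x, φ x ∂μ := by
    have hgarsia := hf.setIntegral_birkhoffMax_pos_nonneg (g := fun x => φ x - c)
      (hφm.sub measurable_const) (hφ.sub (integrable_const c)) N
    rw [integral_sub hφ.integrableOn (integrable_const c).integrableOn, setIntegral_const,
      smul_eq_mul] at hgarsia
    linarith [setIntegral_le_integral (s := G N) hφ (Eventually.of_forall hφ₀)]
  rw [hUnion, hmono.measure_iUnion]
  refine iSup_le fun N => (ENNReal.le_ofReal_iff_toReal_le (measure_ne_top _ _)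
    (div_nonneg (integral_nonneg hφ₀) hc.le)).2 ?_
  rw [le_div_iff₀ hc, mul_comm]
  exact hbound N

theorem ae_exists_forall_birkhoffSum_le [IsFiniteMeasure μ] (hf : MeasurePreserving f μ μ)
    {φ : ℕ → α → ℝ} {c : ℕ → ℝ} (hφm : ∀ k, Measurable (φ k)) (hφ : ∀ k, Integrable (φ k) μ)
    (hφ₀ : ∀ k, 0 ≤ φ k) (hc : ∀ k, 0 < c k)
    (hlim : Tendsto (fun k => (∫ x, φ k x ∂μ) / c k) atTop (𝓝 0)) :
    ∀ᵐ x ∂μ, ∃ k, ∀ n : ℕ, birkhoffSum f (φ k) n x ≤ c k * n := by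
  set B : ℕ → Set α := fun k => {x | ∃ n : ℕ, c k * n < birkhoffSum f (φ k) n x}
  have hB : μ (⋂ k, B k) = 0 :=
    le_antisymm (ge_of_tendsto' (by simpa using ENNReal.tendsto_ofReal hlim) fun k =>
      (measure_mono (Set.iInter_subset B k)).trans
        (hf.measure_exists_birkhoffSum_gt_le (hφm k) (hφ k) (hφ₀ k) (hc k))) bot_le
  filter_upwards [measure_eq_zero_iff_ae_notMem.1 hB] with x hx
  simpa [B] using hx

end MeasureTheory.MeasurePreserving

end BirkhoffMax

section Orbit

variable {α : Type*} [MeasurableSpace α] {μ : Measure α} {f : α → α}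

theorem MeasureTheory.MeasurePreserving.ae_tendsto_apply_iterate_div_atTop_zero
    [IsProbabilityMeasure μ] (hf : MeasurePreserving f μ μ) {φ : α → ℝ} (hφm : Measurable φ)
    (hφ : Integrable φ μ) (hφ₀ : 0 ≤ φ) :
    ∀ᵐ x ∂μ, Tendsto (fun n : ℕ => φ (f^[n] x) / n) atTop (𝓝 0) := by
  have hsmall (m : ℕ) : ∀ᵐ x ∂μ, ∀ᶠ n : ℕ in atTop, φ (f^[n] x) * (m + 1) ≤ n := by
    -- `tsum_prob_mem_Ioi_lt_top` is stated for the `volume` of a `MeasureSpace`.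
    let _ : MeasureSpace α := ⟨μ⟩
    have hsum := ProbabilityTheory.tsum_prob_mem_Ioi_lt_top (X := fun x => φ x * (m + 1))
      (hφ.mul_const _) fun x => mul_nonneg (hφ₀ x) (by positivity)
    refine (ae_eventually_notMem (s := fun n => f^[n] ⁻¹' {x | (n : ℝ) < φ x * (m + 1)}) ?_).mono
      fun x hx => hx.mono fun n hn => not_lt.1 hn
    simp_rw [(hf.iterate _).measure_preimage
      (measurableSet_lt measurable_const (hφm.mul_const _)).nullMeasurableSet]
    exact hsum.ne
  filter_upwards [ae_all_iff.2 hsmall] with x hx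
  refine tendsto_order.2 ⟨fun a ha => Eventually.of_forall fun n =>
    ha.trans_le (div_nonneg (hφ₀ _) n.cast_nonneg), fun a ha => ?_⟩
  obtain ⟨m, hm⟩ := exists_nat_one_div_lt ha
  filter_upwards [hx m, eventually_gt_atTop 0] with n hn hn₀
  refine lt_of_le_of_lt ?_ hm
  rw [div_le_div_iff₀ (by exact_mod_cast hn₀) (by positivity)]
  linarith

theorem MeasureTheory.MeasurePreserving.ae_comp_eq_of_ae_le_comp [IsFiniteMeasure μ]
    (hf : MeasurePreserving f μ μ) {g : α → ℝ} (hg : Measurable g)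
    (hle : ∀ᵐ x ∂μ, g x ≤ g (f x)) : g ∘ f =ᵐ[μ] g := by
  -- each sublevel set a.e. contains its preimage, which has the same finite measure
  have hlevel (q : ℚ) : f ⁻¹' {x | g x < q} =ᵐ[μ] {x | g x < q} :=
    ae_eq_of_ae_subset_of_measure_ge (hle.mono fun x hx h => hx.trans_lt h)
      (hf.measure_preimage (measurableSet_lt hg measurable_const).nullMeasurableSet).ge
      ((measurableSet_lt hg measurable_const).preimage hf.measurable).nullMeasurableSet
      (measure_ne_top _ _)
  filter_upwards [hle, ae_all_iff.2 fun q => (hlevel q).mem_iff] with x hx hq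
  refine le_antisymm (not_lt.1 fun hlt => ?_) hx
  obtain ⟨q, hxq, hqfx⟩ := exists_rat_btwn hlt
  exact (lt_asymm hqfx) ((hq q).2 hxq)

theorem MeasureTheory.Measure.QuasiMeasurePreserving.ae_forall_iterate_eq {β : Type*}
    {g : α → β} (hf : Measure.QuasiMeasurePreserving f μ μ) (h : g ∘ f =ᵐ[μ] g) :
    ∀ᵐ x ∂μ, ∀ k, g (f^[k] x) = g x := by
  refine ae_all_iff.2 fun k => ?_
  induction k with
  | zero => simp
  | succ k ih =>
    filter_upwards [ih, (hf.iterate k).ae h] with x hk hx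
    rw [Function.iterate_succ_apply', ← hk]
    exact hx

end Orbit

section SubadditiveSequence

variable {w : ℕ → ℕ → ℝ}

theorem le_sum_Ico_of_subadditive (hw : ∀ j n m, w j (n + m) ≤ w j n + w (j + n) m)
    (j : ℕ) {r : ℕ} (hr : 1 ≤ r) : w j r ≤ ∑ k ∈ Ico j (j + r), w k 1 := by
  induction r, hr using Nat.le_induction with
  | base => simp
  | succ r hr ih =>
    calc w j (r + 1) ≤ w j r + w (j + r) 1 := hw j r 1
      _ ≤ ∑ k ∈ Ico j (j + r), w k 1 + w (j + r) 1 := by gcongr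
      _ = ∑ k ∈ Ico j (j + (r + 1)), w k 1 := by
        rw [← add_assoc, sum_Ico_succ_top (by omega)]

theorem subadditive_le_of_cover (hw : ∀ j n m, w j (n + m) ≤ w j n + w (j + n) m)
    (hw₁ : ∀ k, 0 ≤ w k 1) {b : ℕ → ℝ} (hb : ∀ k, 0 ≤ b k) {c : ℝ} (hc : 0 ≤ c) {N : ℕ}
    (hcover : ∀ k, (∃ n, 1 ≤ n ∧ n ≤ N ∧ w k n ≤ n * c) ∨ w k 1 ≤ b k)
    (j : ℕ) {r : ℕ} (hr : 1 ≤ r) :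
    w j r ≤ r * c + ∑ k ∈ Ico j (j + r), b k + ∑ k ∈ Ico (j + r - N) (j + r), w k 1 := by
  induction r using Nat.strong_induction_on generalizing j with
  | _ r ih =>
  -- Greedy cut of `[j, j + r)`: from a good start jump a block of length `≤ N`, from a bad one
  -- step once and pay `b`; a remainder of length `≤ N` is bounded by `w _ 1` termwise.
  rcases le_or_gt r N with hrN | hNr
  · have hbsum : 0 ≤ ∑ k ∈ Ico j (j + r), b k := sum_nonneg fun k _ => hb k
    calc w j r ≤ ∑ k ∈ Ico j (j + r), w k 1 := le_sum_Ico_of_subadditive hw j hr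
      _ ≤ ∑ k ∈ Ico (j + r - N) (j + r), w k 1 :=
        sum_le_sum_of_subset_of_nonneg (Ico_subset_Ico (by omega) le_rfl) fun k _ _ => hw₁ k
      _ ≤ _ := by nlinarith [(Nat.cast_nonneg r : (0 : ℝ) ≤ r)]
  · obtain ⟨n, hn₁, hnr, hblock⟩ :
        ∃ n, 1 ≤ n ∧ n ≤ r ∧ w j n ≤ n * c + ∑ k ∈ Ico j (j + n), b k := by
      rcases hcover j with ⟨n, hn₁, hnN, hn⟩ | hj
      · exact ⟨n, hn₁, hnN.trans hNr.le, le_add_of_le_of_nonneg hn (sum_nonneg fun k _ => hb k)⟩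
      · refine ⟨1, le_rfl, hr, ?_⟩
        rw [Nat.cast_one, one_mul, Nat.Ico_succ_singleton, sum_singleton]
        linarith
    rcases eq_or_lt_of_le hnr with rfl | hnr
    · linarith [sum_nonneg fun k (_ : k ∈ Ico (j + n - N) (j + n)) => hw₁ k]
    have hrest := ih (r - n) (by omega) (j + n) (by omega)
    rw [show j + n + (r - n) = j + r by omega] at hrest
    calc w j r = w j (n + (r - n)) := by rw [Nat.add_sub_cancel' hnr.le]
      _ ≤ w j n + w (j + n) (r - n) := hw _ _ _
      _ ≤ (n * c + ∑ k ∈ Ico j (j + n), b k) + ((r - n : ℕ) * c + ∑ k ∈ Ico (j + n) (j + r), b k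
          + ∑ k ∈ Ico (j + r - N) (j + r), w k 1) := add_le_add hblock hrest
      _ = _ := by
        rw [← sum_Ico_consecutive _ (show j ≤ j + n by omega) (show j + n ≤ j + r by omega),
          Nat.cast_sub hnr.le]
        ring

theorem tendsto_sum_Ico_sub_div_atTop_zero {a : ℕ → ℝ} (ha : 0 ≤ a)
    (h : Tendsto (fun n => a n / n) atTop (𝓝 0)) (N : ℕ) :
    Tendsto (fun r : ℕ => (∑ k ∈ Ico (r - N) r, a k) / r) atTop (𝓝 0) := by
  have hterm (i : ℕ) (hi : i < N) : Tendsto (fun r : ℕ => a (r - N + i) / r) atTop (𝓝 0) := by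
    have hshift : Tendsto (fun r : ℕ => r - N + i) atTop atTop :=
      tendsto_atTop_atTop.2 fun b => ⟨b + N, fun r hr => by omega⟩
    refine squeeze_zero' (Eventually.of_forall fun r => div_nonneg (ha _) r.cast_nonneg)
      ?_ (h.comp hshift)
    filter_upwards [eventually_gt_atTop N] with r hr
    exact div_le_div_of_nonneg_left (ha _) (by exact_mod_cast (show 0 < r - N + i by omega))
      (by exact_mod_cast (show r - N + i ≤ r by omega))
  have hsum := tendsto_finsetSum (range N) fun i hi => hterm i (mem_range.1 hi)
  simp only [sum_const_zero] at hsum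
  refine hsum.congr' ?_
  filter_upwards [eventually_ge_atTop N] with r hr
  rw [sum_Ico_eq_sum_range, Nat.sub_sub_self hr, sum_div]

theorem liminf_le_liminf_of_succ_le_add {x y a : ℕ → ℝ}
    (hx : IsBoundedUnder (· ≥ ·) atTop x) (hy : IsBoundedUnder (· ≤ ·) atTop y)
    (hy₀ : IsBoundedUnder (· ≥ ·) atTop y) (ha : Tendsto a atTop (𝓝 0))
    (h : ∀ n, x (n + 1) ≤ a n + y n) : liminf x atTop ≤ liminf y atTop := by
  have hx₁ : IsBoundedUnder (· ≥ ·) atTop fun n => x (n + 1) := hx.imp fun _ hb =>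
    eventually_map.2 ((tendsto_add_atTop_nat 1).eventually (eventually_map.1 hb))
  have hay : IsBoundedUnder (· ≤ ·) atTop (a + y) := isBoundedUnder_le_add ha.isBoundedUnder_le hy
  calc liminf x atTop = liminf (fun n => x (n + 1)) atTop := (liminf_nat_add x 1).symm
    _ ≤ liminf (a + y) atTop :=
        liminf_le_liminf (Eventually.of_forall h) hx₁ hay.isCoboundedUnder_ge
    _ ≤ limsup a atTop + liminf y atTop :=
        liminf_add_le ha.isBoundedUnder_ge ha.isBoundedUnder_le hy₀ hy.isCoboundedUnder_ge
    _ = liminf y atTop := by rw [ha.limsup_eq, zero_add]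

end SubadditiveSequence

namespace Kingman

variable {Ω : Type*} {U : Ω → Ω} {W : ℕ → Ω → ℝ}

noncomputable def liminfAverage (W : ℕ → Ω → ℝ) (ω : Ω) : ℝ :=
  liminf (fun n : ℕ => W n ω / n) atTop

def goodSet (W : ℕ → Ω → ℝ) (ε : ℝ) (N : ℕ) : Set Ω :=
  {x | ∃ n, 1 ≤ n ∧ n ≤ N ∧ W n x ≤ n * (liminfAverage W x + ε)}

theorem subadditive_orbit (hsub : ∀ m n : ℕ, ∀ ω, W (n + m) ω ≤ W n ω + W m (U^[n] ω))
    (ω : Ω) (j n m : ℕ) : W (n + m) (U^[j] ω) ≤ W n (U^[j] ω) + W m (U^[j + n] ω) := by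
  rw [add_comm j n, Function.iterate_add_apply]
  exact hsub m n _

theorem le_birkhoffSum_of_subadditive
    (hsub : ∀ m n : ℕ, ∀ ω, W (n + m) ω ≤ W n ω + W m (U^[n] ω)) {n : ℕ} (hn : 1 ≤ n) (ω : Ω) :
    W n ω ≤ birkhoffSum U (W 1) n ω := by
  simpa [birkhoffSum] using
    le_sum_Ico_of_subadditive (w := fun j n => W n (U^[j] ω)) (subadditive_orbit hsub ω) 0 hn

theorem liminfAverage_nonneg (hnonneg : ∀ n ω, 0 ≤ W n ω) {ω : Ω}
    (hb : IsBoundedUnder (· ≤ ·) atTop fun n : ℕ => W n ω / n) : 0 ≤ liminfAverage W ω :=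
  le_liminf_of_le hb.isCoboundedUnder_ge
    (Eventually.of_forall fun n => div_nonneg (hnonneg n ω) n.cast_nonneg)

theorem liminfAverage_le_liminfAverage_apply (hnonneg : ∀ n ω, 0 ≤ W n ω)
    (hsub : ∀ m n : ℕ, ∀ ω, W (n + m) ω ≤ W n ω + W m (U^[n] ω)) {ω : Ω}
    (hbU : IsBoundedUnder (· ≤ ·) atTop fun n : ℕ => W n (U ω) / n) :
    liminfAverage W ω ≤ liminfAverage W (U ω) := by
  have hdiv₀ (x : Ω) : IsBoundedUnder (· ≥ ·) atTop fun n : ℕ => W n x / n :=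
    isBoundedUnder_of_eventually_ge
      (Eventually.of_forall fun n => div_nonneg (hnonneg n x) n.cast_nonneg)
  refine liminf_le_liminf_of_succ_le_add (a := fun n : ℕ => W 1 ω / (n + 1)) (hdiv₀ ω) hbU
    (hdiv₀ (U ω)) (by simpa [div_eq_mul_inv] using
      tendsto_one_div_add_atTop_nhds_zero_nat.const_mul (W 1 ω))
    fun n => ?_
  rcases n with _ | n
  · simp
  have h := hsub (n + 1) 1 ω
  rw [add_comm 1, Function.iterate_one] at h
  calc W (n + 1 + 1) ω / ↑(n + 1 + 1) ≤ (W 1 ω + W (n + 1) (U ω)) / (↑(n + 1) + 1) := by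
        push_cast; gcongr
    _ = W 1 ω / (↑(n + 1) + 1) + W (n + 1) (U ω) / (↑(n + 1) + 1) := add_div _ _ _
    _ ≤ W 1 ω / (↑(n + 1) + 1) + W (n + 1) (U ω) / ↑(n + 1) := by
        gcongr
        · exact hnonneg _ _
        · push_cast; linarith

theorem eventually_div_le_of_birkhoffSum_le (hW₁ : 0 ≤ W 1)
    (hsub : ∀ m n : ℕ, ∀ ω, W (n + m) ω ≤ W n ω + W m (U^[n] ω)) {ε δ : ℝ} (hε : 0 ≤ ε)
    (hδ : 0 < δ) {N : ℕ} {ω : Ω} (hinv : ∀ k, liminfAverage W (U^[k] ω) = liminfAverage W ω)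
    (hg₀ : 0 ≤ liminfAverage W ω) (htail : Tendsto (fun n : ℕ => W 1 (U^[n] ω) / n) atTop (𝓝 0))
    (hsmall : ∀ n : ℕ, birkhoffSum U ((goodSet W ε N)ᶜ.indicator (W 1)) n ω ≤ δ * n) :
    ∀ᶠ r : ℕ in atTop, W r ω / r ≤ liminfAverage W ω + ε + 2 * δ := by
  set φ := (goodSet W ε N)ᶜ.indicator (W 1)
  have hcover (k : ℕ) : (∃ n, 1 ≤ n ∧ n ≤ N ∧ W n (U^[k] ω) ≤ n * (liminfAverage W ω + ε)) ∨
      W 1 (U^[k] ω) ≤ φ (U^[k] ω) := by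
    by_cases hk : U^[k] ω ∈ goodSet W ε N
    · obtain ⟨n, hn₁, hnN, hn⟩ := hk
      exact .inl ⟨n, hn₁, hnN, by rwa [hinv k] at hn⟩
    · exact .inr (Set.indicator_of_mem (Set.mem_compl hk) _).ge
  have hblocks (r : ℕ) (hr : 1 ≤ r) : W r ω ≤ r * (liminfAverage W ω + ε)
      + birkhoffSum U φ r ω + ∑ k ∈ Ico (r - N) r, W 1 (U^[k] ω) := by
    simpa [birkhoffSum] using subadditive_le_of_cover (w := fun j n => W n (U^[j] ω))
      (subadditive_orbit hsub ω) (fun k => hW₁ _) (b := fun k => φ (U^[k] ω))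
      (fun k => Set.indicator_nonneg (fun x _ => hW₁ x) _) (by linarith) hcover 0 hr
  filter_upwards [eventually_ge_atTop 1, (tendsto_sum_Ico_sub_div_atTop_zero
    (fun k => hW₁ _) htail N).eventually (eventually_le_nhds hδ)] with r hr htail_r
  have hrpos : (0 : ℝ) < r := by exact_mod_cast hr
  rw [div_le_iff₀ hrpos] at htail_r ⊢
  linarith [hblocks r hr, hsmall r]

variable [MeasurableSpace Ω] {P : Measure Ω}

theorem measurable_liminfAverage (hmeas : ∀ n, Measurable (W n)) :
    Measurable (liminfAverage W) :=
  Measurable.liminf fun n => (hmeas n).div_const n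

theorem measurableSet_goodSet (hmeas : ∀ n, Measurable (W n)) (ε : ℝ) (N : ℕ) :
    MeasurableSet (goodSet W ε N) := by
  simp only [goodSet, Set.ofPred_exists]
  refine MeasurableSet.iUnion fun n => ?_
  by_cases hn : 1 ≤ n ∧ n ≤ N
  · simpa [hn] using measurableSet_le (hmeas n)
      ((measurable_liminfAverage hmeas).add_const ε |>.const_mul n)
  · simp [← and_assoc, hn]

theorem ae_isBoundedUnder_div [IsFiniteMeasure P] (hU : MeasurePreserving U P P)
    (hmeas₁ : Measurable (W 1)) (hW₁ : 0 ≤ W 1) (hint : Integrable (W 1) P)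
    (hsub : ∀ m n : ℕ, ∀ ω, W (n + m) ω ≤ W n ω + W m (U^[n] ω)) :
    ∀ᵐ ω ∂P, IsBoundedUnder (· ≤ ·) atTop fun n : ℕ => W n ω / n := by
  have hlim : Tendsto (fun k : ℕ => (∫ x, W 1 x ∂P) / (k + 1)) atTop (𝓝 0) := by
    simpa [div_eq_mul_inv] using tendsto_one_div_add_atTop_nhds_zero_nat.const_mul (∫ x, W 1 x ∂P)
  filter_upwards [hU.ae_exists_forall_birkhoffSum_le (fun _ => hmeas₁) (fun _ => hint)
    (fun _ => hW₁) (fun k => Nat.cast_add_one_pos k) hlim] with ω ⟨k, hk⟩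
  refine isBoundedUnder_of_eventually_le (a := k + 1) ?_
  filter_upwards [eventually_ge_atTop 1] with n hn
  rw [div_le_iff₀ (by exact_mod_cast hn)]
  exact (le_birkhoffSum_of_subadditive hsub hn ω).trans (hk n)

theorem ae_liminfAverage_comp_eq [IsFiniteMeasure P] (hU : MeasurePreserving U P P)
    (hmeas : ∀ n, Measurable (W n)) (hnonneg : ∀ n ω, 0 ≤ W n ω)
    (hsub : ∀ m n : ℕ, ∀ ω, W (n + m) ω ≤ W n ω + W m (U^[n] ω))
    (hbdd : ∀ᵐ ω ∂P, IsBoundedUnder (· ≤ ·) atTop fun n : ℕ => W n ω / n) :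
    liminfAverage W ∘ U =ᵐ[P] liminfAverage W :=
  hU.ae_comp_eq_of_ae_le_comp (measurable_liminfAverage hmeas) <|
    (hU.quasiMeasurePreserving.ae hbdd).mono fun _ hbU =>
      liminfAverage_le_liminfAverage_apply hnonneg hsub hbU

theorem tendsto_integral_indicator_compl_goodSet (hmeas : ∀ n, Measurable (W n))
    (hint : Integrable (W 1) P)
    (hbdd : ∀ᵐ ω ∂P, IsBoundedUnder (· ≤ ·) atTop fun n : ℕ => W n ω / n)
    {ε : ℝ} (hε : 0 < ε) :
    Tendsto (fun N => ∫ x, (goodSet W ε N)ᶜ.indicator (W 1) x ∂P) atTop (𝓝 0) := by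
  have hlim : ∀ᵐ ω ∂P, Tendsto (fun N => (goodSet W ε N)ᶜ.indicator (W 1) ω) atTop (𝓝 0) := by
    filter_upwards [hbdd] with ω hb
    obtain ⟨n, hn, hn₁⟩ := ((frequently_lt_of_liminf_lt hb.isCoboundedUnder_ge
      (lt_add_of_pos_right (liminfAverage W ω) hε)).and_eventually
        (eventually_ge_atTop 1)).exists
    rw [div_lt_iff₀ (by exact_mod_cast hn₁), mul_comm] at hn
    refine tendsto_const_nhds.congr' ?_
    filter_upwards [eventually_ge_atTop n] with N hN
    rw [Set.indicator_of_notMem (Set.notMem_compl_iff.2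
      (show ω ∈ goodSet W ε N from ⟨n, hn₁, hN, hn.le⟩))]
  simpa using tendsto_integral_of_dominated_convergence (fun x => ‖W 1 x‖)
    (fun N => ((hmeas 1).indicator (measurableSet_goodSet hmeas ε N).compl).aestronglyMeasurable)
    hint.norm (fun N => Eventually.of_forall fun x => norm_indicator_le_norm_self _ _) hlim

theorem ae_eventually_div_le [IsProbabilityMeasure P] (hU : MeasurePreserving U P P)
    (hmeas : ∀ n, Measurable (W n)) (hnonneg : ∀ n ω, 0 ≤ W n ω)
    (hsub : ∀ m n : ℕ, ∀ ω, W (n + m) ω ≤ W n ω + W m (U^[n] ω)) (hint : Integrable (W 1) P)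
    (hbdd : ∀ᵐ ω ∂P, IsBoundedUnder (· ≤ ·) atTop fun n : ℕ => W n ω / n)
    {ε δ : ℝ} (hε : 0 < ε) (hδ : 0 < δ) :
    ∀ᵐ ω ∂P, ∀ᶠ r : ℕ in atTop, W r ω / r ≤ liminfAverage W ω + ε + 2 * δ := by
  have hsmall := hU.ae_exists_forall_birkhoffSum_le (c := fun _ => δ)
    (φ := fun N => (goodSet W ε N)ᶜ.indicator (W 1))
    (fun N => (hmeas 1).indicator (measurableSet_goodSet hmeas ε N).compl)
    (fun N => hint.indicator (measurableSet_goodSet hmeas ε N).compl)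
    (fun N => Set.indicator_nonneg fun x _ => hnonneg 1 x) (fun _ => hδ)
    (by simpa using (tendsto_integral_indicator_compl_goodSet hmeas hint hbdd hε).div_const δ)
  have hinv := hU.quasiMeasurePreserving.ae_forall_iterate_eq
    (ae_liminfAverage_comp_eq hU hmeas hnonneg hsub hbdd)
  filter_upwards [hsmall, hinv, hbdd,
    hU.ae_tendsto_apply_iterate_div_atTop_zero (hmeas 1) hint (hnonneg 1)]
    with ω ⟨N, hN⟩ hinvω hb htail
  exact eventually_div_le_of_birkhoffSum_le (hnonneg 1) hsub hε.le hδ hinvω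
    (liminfAverage_nonneg hnonneg hb) htail hN

theorem ae_tendsto_div_liminfAverage [IsProbabilityMeasure P] (hU : MeasurePreserving U P P)
    (hmeas : ∀ n, Measurable (W n)) (hnonneg : ∀ n ω, 0 ≤ W n ω)
    (hsub : ∀ m n : ℕ, ∀ ω, W (n + m) ω ≤ W n ω + W m (U^[n] ω)) (hint : Integrable (W 1) P)
    (hbdd : ∀ᵐ ω ∂P, IsBoundedUnder (· ≤ ·) atTop fun n : ℕ => W n ω / n) :
    ∀ᵐ ω ∂P, Tendsto (fun n : ℕ => W n ω / n) atTop (𝓝 (liminfAverage W ω)) := by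
  have hupper : ∀ᵐ ω ∂P, ∀ m : ℕ, ∀ᶠ r : ℕ in atTop,
      W r ω / r ≤ liminfAverage W ω + 1 / (m + 1) + 2 * (1 / (m + 1)) :=
    ae_all_iff.2 fun m => ae_eventually_div_le hU hmeas hnonneg hsub hint hbdd
      Nat.one_div_pos_of_nat Nat.one_div_pos_of_nat
  filter_upwards [hupper] with ω hω
  refine tendsto_order.2 ⟨fun a ha => eventually_lt_of_lt_liminf ha
    (isBoundedUnder_of_eventually_ge (Eventually.of_forall fun n =>
      div_nonneg (hnonneg n ω) n.cast_nonneg)), fun a ha => ?_⟩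
  obtain ⟨m, hm⟩ := exists_nat_one_div_lt (show 0 < (a - liminfAverage W ω) / 3 by linarith)
  filter_upwards [hω m] with r hr
  linarith

end Kingman

open Kingman

/-- Kingman's subadditive ergodic theorem. -/
theorem kingman_subadditive_ergodic
    {Ω : Type*} [MeasurableSpace Ω] (P : Measure Ω) [IsProbabilityMeasure P]
    (U : Ω → Ω) (hU : MeasurePreserving U P P)
    (W : ℕ → Ω → ℝ)
    (hmeas : ∀ n, Measurable (W n))
    (hnonneg : ∀ n ω, 0 ≤ W n ω)
    (hsub : ∀ m n : ℕ, ∀ ω, W (n + m) ω ≤ W n ω + W m (U^[n] ω))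
    (hint : Integrable (W 1) P) :
    ∃ Winf : Ω → ℝ,
      (∀ᵐ ω ∂P, Winf (U ω) = Winf ω) ∧
      (∀ᵐ ω ∂P, Tendsto (fun n : ℕ => W n ω / n) atTop (𝓝 (Winf ω))) ∧
      (Ergodic U P → ∃ c : ℝ, ∀ᵐ ω ∂P, Winf ω = c) := by
  have hbdd := ae_isBoundedUnder_div hU (hmeas 1) (hnonneg 1) hint hsub
  have hinv := ae_liminfAverage_comp_eq hU hmeas hnonneg hsub hbdd
  refine ⟨liminfAverage W, hinv, ae_tendsto_div_liminfAverage hU hmeas hnonneg hsub hint hbdd,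
    fun hergodic => ?_⟩
  exact hergodic.ae_eq_const_of_ae_eq_comp₀ (measurable_liminfAverage hmeas).nullMeasurable hinv
end

section
/- Let (X, d) be δ-hyperbolic and suppose points x_0, x_1, …, x_N ∈ X satisfy the alignment condition (x_{i-1}, x_{i+1})_{x_i} ≤ K for all 1 ≤ i ≤ N−1, and d(x_{i-1}, x_i) ≥ 2K + 2δ + 1 for all i. Then d(x_0, x_N) ≥ ∑_{i=1}^N d(x_{i-1}, x_i) − N(2K + 2δ), and in particular d(x_0, x_N) ≥ N. -/
/-- The Gromov product `(y, z)_x` in a metric space. -/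
noncomputable def gp {X : Type*} [MetricSpace X] (x y z : X) : ℝ :=
  (dist x y + dist x z - dist y z) / 2

/-- Chain (concatenation) lemma in a δ-hyperbolic space: aligned long segments make
definite progress: `d(x₀, x_N) ≥ ∑ d(x_{i-1}, x_i) − N(2K + 2δ) ≥ N`. -/
theorem chain_lemma {X : Type*} [MetricSpace X]
    (δ K : ℝ) (hδ0 : 0 ≤ δ) (hK0 : 0 ≤ K)
    (hhyp : ∀ w x y z : X, min (gp w x y) (gp w y z) - δ ≤ gp w x z)
    (N : ℕ) (hN : 1 ≤ N) (x : ℕ → X)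
    (halign : ∀ i : ℕ, 1 ≤ i → i + 1 ≤ N → gp (x i) (x (i - 1)) (x (i + 1)) ≤ K)
    (hlong : ∀ i : ℕ, 1 ≤ i → i ≤ N → 2 * K + 2 * δ + 1 ≤ dist (x (i - 1)) (x i)) :
    (∑ i ∈ Finset.range N, dist (x i) (x (i + 1))) - N * (2 * K + 2 * δ)
        ≤ dist (x 0) (x N) ∧
    (N : ℝ) ≤ dist (x 0) (x N) := by
  have hgp_comm : ∀ w y z : X, gp w y z = gp w z y := by
    intro w y z; unfold gp; rw [dist_comm y z]; ring
  have hdist_eq : ∀ w y z : X, dist y z = dist w y + dist w z - 2 * gp w y z := by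
    intro w y z; unfold gp; ring
  have hflip : ∀ w y z : X, gp w y z = dist w y - gp y w z := by
    intro w y z; unfold gp; rw [dist_comm w y, dist_comm w z]; ring
  -- key induction
  have key : ∀ n : ℕ, 1 ≤ n → n ≤ N →
      ((∑ i ∈ Finset.range n, dist (x i) (x (i + 1))) - ((n : ℝ) - 1) * (2 * K + 2 * δ)
          ≤ dist (x 0) (x n))
      ∧ (n + 1 ≤ N → gp (x n) (x 0) (x (n + 1)) ≤ K + δ) := by
    intro n
    induction n with
    | zero => intro h; omega
    | succ n ih =>
      intro _ hnN
      rcases Nat.eq_zero_or_pos n with hn0 | hn1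
      · subst hn0
        constructor
        · simp [Finset.sum_range_one]
        · intro h2
          have := halign 1 le_rfl (by omega)
          simpa using this.trans (by linarith)
      · obtain ⟨ihd, ihgp⟩ := ih hn1 (by omega)
        have gpn : gp (x n) (x 0) (x (n + 1)) ≤ K + δ := ihgp (by omega)
        have hd : dist (x 0) (x (n + 1)) =
            dist (x n) (x 0) + dist (x n) (x (n + 1)) - 2 * gp (x n) (x 0) (x (n + 1)) :=
          hdist_eq (x n) (x 0) (x (n + 1))
        have hlong' : 2 * K + 2 * δ + 1 ≤ dist (x n) (x (n + 1)) := by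
          have := hlong (n + 1) (by omega) hnN
          simpa using this
        constructor
        · rw [Finset.sum_range_succ]
          rw [dist_comm (x n) (x 0)] at hd
          push_cast
          linarith
        · intro hn2
          -- big : gp (x (n+1)) (x n) (x 0) ≥ K + δ + 1
          have hbig : K + δ + 1 ≤ gp (x (n + 1)) (x n) (x 0) := by
            have h1 : gp (x (n + 1)) (x n) (x 0) =
                dist (x (n + 1)) (x n) - gp (x n) (x (n + 1)) (x 0) :=
              hflip (x (n + 1)) (x n) (x 0)
            have h2 : gp (x n) (x (n + 1)) (x 0) = gp (x n) (x 0) (x (n + 1)) :=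
              hgp_comm _ _ _
            rw [dist_comm] at h1
            linarith [h1, h2.symm ▸ gpn]
          have halign' : gp (x (n + 1)) (x n) (x (n + 2)) ≤ K := by
            have := halign (n + 1) (by omega) (by omega)
            simpa using this
          have hmin := hhyp (x (n + 1)) (x n) (x 0) (x (n + 2))
          have hmin' : min (gp (x (n + 1)) (x n) (x 0))
              (gp (x (n + 1)) (x 0) (x (n + 2))) ≤ K + δ := by linarith
          rcases min_le_iff.mp hmin' with h | h
          · linarith
          · linarith
  obtain ⟨hd, -⟩ := key N hN le_rfl
  have hsum : (N : ℝ) * (2 * K + 2 * δ + 1) ≤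
      ∑ i ∈ Finset.range N, dist (x i) (x (i + 1)) := by
    have := Finset.card_nsmul_le_sum (Finset.range N)
        (fun i => dist (x i) (x (i + 1))) (2 * K + 2 * δ + 1) ?_
    · rw [nsmul_eq_mul, Finset.card_range] at this; exact this
    · intro i hi
      have hiN : i + 1 ≤ N := Finset.mem_range.mp hi
      have := hlong (i + 1) (by omega) hiN
      simpa using this
  constructor
  · have hc : (0:ℝ) ≤ 2 * K + 2 * δ := by linarith
    nlinarith
  · nlinarith
end

section
/- Let ν be a G-stationary probability measure for a probability measure μ on a countable group G (i.e., ν = ∑_g μ(g) g_*ν) on a compact metrizable G-space B, where G acts by homeomorphisms. If ν has an atom, then the set of atoms of maximal mass is finite, nonempty, and invariant under every g ∈ supp(μ); hence if the subgroup generated by supp(μ) has no finite orbit in B, then ν is non-atomic. -/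
open MeasureTheory Pointwise ENNReal

/-- Non-atomicity of stationary measures: if `ν` is a `μ`-stationary probability
measure on a compact metrizable `G`-space `B`, then if `ν` has an atom, the set of
atoms of maximal mass is nonempty, finite and invariant under every element of the
support of `μ`; consequently, if the subgroup generated by the support of `μ` has no
finite orbit in `B`, then `ν` is non-atomic. -/
theorem stationary_measure_nonatomic
    {G : Type*} [Group G] [Countable G]
    {B : Type*} [TopologicalSpace B] [CompactSpace B] [TopologicalSpace.MetrizableSpace B]
    [MeasurableSpace B] [BorelSpace B]
    [MulAction G B] (hcont : ∀ g : G, Continuous (fun b : B => g • b))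
    {mG : MeasurableSpace G} (μ : Measure G) [IsProbabilityMeasure μ]
    (ν : Measure B) [IsProbabilityMeasure ν]
    (hstat : ∀ A : Set B, MeasurableSet A →
      ν A = ∑' g : G, μ {g} * ν ((fun b => g • b) ⁻¹' A)) :
    ((∃ b : B, ν {b} ≠ 0) →
      {b : B | ν {b} = ⨆ c : B, ν {c}}.Nonempty ∧
      {b : B | ν {b} = ⨆ c : B, ν {c}}.Finite ∧
      ∀ g : G, μ {g} ≠ 0 →
        (fun b : B => g • b) '' {b : B | ν {b} = ⨆ c : B, ν {c}}
          = {b : B | ν {b} = ⨆ c : B, ν {c}}) ∧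
    ((∀ b : B, ¬ Set.Finite
        {b' : B | ∃ g ∈ Subgroup.closure {g : G | μ {g} ≠ 0}, g • b = b'}) →
      ∀ b : B, ν {b} = 0) := by
  set m := ⨆ c : B, ν {c} with hm
  set S := {b : B | ν {b} = m} with hS
  have hb_le : ∀ c : B, ν {c} ≤ m := fun c => le_iSup (fun c : B => ν {c}) c
  have hm_le1 : m ≤ 1 := iSup_le fun c => prob_le_one
  have hmtop : m ≠ ⊤ := (hm_le1.trans_lt ENNReal.one_lt_top).ne
  -- total mass of μ on singletons is 1
  have hsum1 : ∑' g : G, μ {g} = 1 := by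
    have h := hstat Set.univ MeasurableSet.univ
    simpa using h.symm
  -- stationarity at singletons
  have hstat' : ∀ b : B, ν {b} = ∑' g : G, μ {g} * ν {g⁻¹ • b} := by
    intro b
    have h := hstat {b} (measurableSet_singleton b)
    have hpre : ∀ g : G, (fun x : B => g • x) ⁻¹' {b} = {g⁻¹ • b} := by
      intro g; ext x; simp [smul_eq_iff_eq_inv_smul]
    simpa only [hpre] using h
  -- sets of atoms of mass at least ε > 0 are finite
  have hfin : ∀ ε : ℝ≥0∞, ε ≠ 0 → {b : B | ε ≤ ν {b}}.Finite := by
    intro ε hε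
    by_contra hinf
    have f := Set.Infinite.natEmbedding _ (hinf : Set.Infinite _)
    have hdisj : Pairwise (Function.onFun Disjoint fun n : ℕ => ({(f n : B)} : Set B)) := by
      intro i j hij
      simp only [Function.onFun, Set.disjoint_singleton]
      exact fun h => hij (f.injective (Subtype.coe_injective h))
    have h1 : ν (⋃ n : ℕ, ({(f n : B)} : Set B)) = ∑' n : ℕ, ν {(f n : B)} :=
      measure_iUnion hdisj fun n => measurableSet_singleton _
    have h2 : (⊤ : ℝ≥0∞) ≤ ∑' n : ℕ, ν {(f n : B)} := by
      calc (⊤ : ℝ≥0∞) = ∑' _ : ℕ, ε := (ENNReal.tsum_const_eq_top_of_ne_zero hε).symm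
      _ ≤ _ := ENNReal.tsum_le_tsum fun n => (f n).2
    have h3 : ν (⋃ n : ℕ, ({(f n : B)} : Set B)) ≤ 1 := prob_le_one
    rw [h1] at h3
    exact absurd (le_antisymm (le_top) (h2.trans h3 |>.trans le_top)) (by
      intro h
      have := h2.trans h3
      simp at this)
  -- the key invariance: maximal atoms are moved to maximal atoms
  have hkey : ∀ b : B, ν {b} = m → ∀ g : G, μ {g} ≠ 0 → ν {g⁻¹ • b} = m := by
    intro b hb g0 hg0
    by_contra hne
    have hlt : ν {g0⁻¹ • b} < m := lt_of_le_of_ne (hb_le _) hne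
    have hstb := hstat' b
    have hfintop : ∑' g : G, μ {g} * ν {g⁻¹ • b} ≠ ⊤ := by
      rw [← hstb, hb]; exact hmtop
    have hμtop : μ {g0} ≠ ⊤ := ((prob_le_one (μ := μ)).trans_lt ENNReal.one_lt_top).ne
    have hlt2 : ∑' g : G, μ {g} * ν {g⁻¹ • b} < ∑' g : G, μ {g} * m :=
      ENNReal.tsum_lt_tsum hfintop (fun g => mul_le_mul_right (hb_le _) _)
        (ENNReal.mul_right_strictMono hg0 hμtop hlt)
    rw [ENNReal.tsum_mul_right, hsum1, one_mul, ← hstb, hb] at hlt2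
    exact lt_irrefl m hlt2
  -- main statement (first bullet)
  have main : (∃ b : B, ν {b} ≠ 0) → S.Nonempty ∧ S.Finite ∧
      ∀ g : G, μ {g} ≠ 0 → (fun b : B => g • b) '' S = S := by
    rintro ⟨b0, hb0⟩
    have hm0 : m ≠ 0 := by
      intro h
      exact hb0 (le_antisymm (h ▸ hb_le b0) zero_le)
    -- the supremum is attained
    have hhalf : m / 2 < m := ENNReal.half_lt_self hm0 hmtop
    obtain ⟨b1, hb1⟩ := lt_iSup_iff.mp hhalf
    have hT : {b : B | m / 2 ≤ ν {b}}.Finite := by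
      apply hfin
      simpa using hm0
    have hb1T : b1 ∈ hT.toFinset := by
      rw [Set.Finite.mem_toFinset]; exact hb1.le
    obtain ⟨bm, hbmT, hbmax⟩ := hT.toFinset.exists_max_image (fun c => ν {c}) ⟨b1, hb1T⟩
    have hbm : ν {bm} = m := by
      refine le_antisymm (hb_le bm) (iSup_le fun c => ?_)
      by_cases hc : m / 2 ≤ ν {c}
      · exact hbmax c (by rwa [Set.Finite.mem_toFinset])
      · exact (le_of_not_ge hc).trans ((hb1.le).trans (hbmax b1 hb1T))
    have hSne : S.Nonempty := ⟨bm, hbm⟩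
    have hSfin : S.Finite := hT.subset (by
      intro c hc
      have : ν {c} = m := hc
      rw [Set.mem_setOf_eq, this]
      exact (ENNReal.half_lt_self hm0 hmtop).le)
    have hstabmem : ∀ g : G, μ {g} ≠ 0 → g ∈ MulAction.stabilizer G S := by
      intro g hg
      have hsubset : (fun b : B => g⁻¹ • b) '' S ⊆ S := by
        rintro _ ⟨b, hb, rfl⟩
        exact hkey b hb g hg
      have heq : (fun b : B => g⁻¹ • b) '' S = S :=
        Set.eq_of_subset_of_ncard_le hsubset
          (le_of_eq (Set.ncard_image_of_injective S (MulAction.injective g⁻¹)).symm) hSfin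
      have hginv : g⁻¹ ∈ MulAction.stabilizer G S := by
        rw [MulAction.mem_stabilizer_iff]
        exact heq
      simpa using (MulAction.stabilizer G S).inv_mem hginv
    refine ⟨hSne, hSfin, fun g hg => ?_⟩
    exact (MulAction.mem_stabilizer_iff).mp (hstabmem g hg)
  refine ⟨main, ?_⟩
  intro horb b
  by_contra hb
  obtain ⟨⟨bm, hbm⟩, hSfin, hinv⟩ := main ⟨b, hb⟩
  have hclosure : Subgroup.closure {g : G | μ {g} ≠ 0} ≤ MulAction.stabilizer G S := by
    rw [Subgroup.closure_le]
    intro g hg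
    rw [SetLike.mem_coe, MulAction.mem_stabilizer_iff]
    exact hinv g hg
  have horbsub : {b' : B | ∃ g ∈ Subgroup.closure {g : G | μ {g} ≠ 0}, g • bm = b'} ⊆ S := by
    rintro _ ⟨g, hgmem, rfl⟩
    have hgS : g • S = S := (MulAction.mem_stabilizer_iff).mp (hclosure hgmem)
    exact hgS ▸ Set.smul_mem_smul_set hbm
  exact horb bm (hSfin.subset horbsub)
end
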